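/- Let G be a Polish group with right-invariant compatible metric d bounded by 1, let (X,τ) be a Polish G-space, and let (𝓞_i)_{i∈ℕ} be a countable basis for τ. Then the map ρ : X → (𝓛(G,d))^ℕ given by ρ(x) = (φ^{𝓞_i}_x)_{i∈ℕ} is an injective G-mapping into the compact Polish G-space (𝓛(G,d))^ℕ (with the product topology and coordinatewise action) such that the preimage under ρ of every open set is Fσ in (X,τ); i.e., ρ is a Baire class 1 G-embedding of X into a compact Polish G-space. -/

import Mathlib

open Topology
open scoped Classical

/-- `LSet d` is the set `𝓛(G, d)` of functions `f : G → [0,1]` such that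
`|f g - f h| ≤ d g h` for all `g, h`, regarded as a subset of `G → ℝ` with the
product (pointwise convergence) topology. -/
def LSet {G : Type*} (d : G → G → ℝ) : Set (G → ℝ) :=
  {f | (∀ y, f y ∈ Set.Icc (0 : ℝ) 1) ∧ ∀ y₁ y₂, |f y₁ - f y₂| ≤ d y₁ y₂}

/-- `phi d O x h = inf {d h g : g • x ∈ O}` (with value `1` when `{g : g • x ∈ O}` is
empty); i.e. the map `φ^𝓞 : X → 𝓛(G, d)`, `x ↦ φ^𝓞_x`. -/
noncomputable def phi {G X : Type*} [SMul G X] (d : G → G → ℝ) (O : Set X)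
    (x : X) (h : G) : ℝ :=
  if {g : G | g • x ∈ O}.Nonempty then sInf ((fun g => d h g) '' {g : G | g • x ∈ O})
  else 1

/-- A set is Fσ if it is a countable union of closed sets. -/
def IsFSigma {X : Type*} [TopologicalSpace X] (s : Set X) : Prop :=
  ∃ F : ℕ → Set X, (∀ n, IsClosed (F n)) ∧ s = ⋃ n, F n

section FSigmaAux
variable {X : Type*} [TopologicalSpace X]

lemma IsClosed.isFSigma {s : Set X} (h : IsClosed s) : IsFSigma s :=
  ⟨fun _ => s, fun _ => h, (Set.iUnion_const s).symm⟩

lemma isFSigma_iUnion_closed {ι : Type*} [Countable ι] {F : ι → Set X}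
    (h : ∀ i, IsClosed (F i)) : IsFSigma (⋃ i, F i) := by
  rcases isEmpty_or_nonempty ι with hι | hι
  · refine ⟨fun _ => ∅, fun _ => isClosed_empty, by simp⟩
  · obtain ⟨f, hf⟩ := exists_surjective_nat ι
    exact ⟨fun n => F (f n), fun n => h (f n), (hf.iUnion_comp F).symm⟩

lemma IsFSigma.iUnion {ι : Type*} [Countable ι] {s : ι → Set X}
    (h : ∀ i, IsFSigma (s i)) : IsFSigma (⋃ i, s i) := by
  choose F hFc hFe using h
  have : (⋃ i, s i) = ⋃ p : ι × ℕ, F p.1 p.2 := by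
    simp only [Set.iUnion_prod', ← hFe]
  rw [this]
  exact isFSigma_iUnion_closed (fun p => hFc p.1 p.2)

lemma IsFSigma.inter {s t : Set X} (hs : IsFSigma s) (ht : IsFSigma t) :
    IsFSigma (s ∩ t) := by
  obtain ⟨F, hFc, rfl⟩ := hs
  obtain ⟨K, hKc, rfl⟩ := ht
  have : (⋃ n, F n) ∩ (⋃ n, K n) = ⋃ p : ℕ × ℕ, F p.1 ∩ K p.2 := by
    ext x; simp only [Set.mem_inter_iff, Set.mem_iUnion, Prod.exists]; tauto
  rw [this]
  exact isFSigma_iUnion_closed fun p => (hFc p.1).inter (hKc p.2)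

lemma isFSigma_univ : IsFSigma (Set.univ : Set X) := isClosed_univ.isFSigma

lemma isFSigma_biInter_finset {α : Type*} (s : Finset α) {t : α → Set X}
    (h : ∀ p ∈ s, IsFSigma (t p)) : IsFSigma (⋂ p ∈ s, t p) := by
  classical
  induction s using Finset.induction_on with
  | empty => simpa using isFSigma_univ
  | insert _ _ hx ih =>
    rw [Finset.set_biInter_insert]
    exact (h _ (Finset.mem_insert_self _ _)).inter
      (ih fun p hp => h p (Finset.mem_insert_of_mem hp))

lemma IsOpen.isFSigma [PolishSpace X] {s : Set X} (h : IsOpen s) : IsFSigma s := by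
  letI := TopologicalSpace.upgradeIsCompletelyMetrizable X
  rcases Set.eq_empty_or_nonempty sᶜ with he | hne
  · have : s = Set.univ := by
      rw [← Set.compl_empty, ← he, compl_compl]
    rw [this]; exact isFSigma_univ
  · refine ⟨fun n => {x | 1 / (n + 1 : ℝ) ≤ Metric.infDist x sᶜ}, fun n => ?_, ?_⟩
    · exact isClosed_le continuous_const (Metric.continuous_infDist_pt _)
    · ext x
      simp only [Set.mem_iUnion, Set.mem_setOf_eq]
      constructor
      · intro hx
        have hpos : 0 < Metric.infDist x sᶜ :=
          (h.isClosed_compl.notMem_iff_infDist_pos hne).1 (by simpa using hx)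
        obtain ⟨n, hn⟩ := exists_nat_one_div_lt hpos
        exact ⟨n, hn.le⟩
      · rintro ⟨n, hn⟩
        by_contra hx
        have : Metric.infDist x sᶜ = 0 := Metric.infDist_zero_of_mem (by simpa using hx)
        rw [this] at hn
        have : (0:ℝ) < 1 / (n+1) := by positivity
        linarith

end FSigmaAux

section PhiAux

set_option linter.unusedSectionVars false

variable {G X : Type*} [Group G] [MulAction G X] {d : G → G → ℝ}
  (hsymm : ∀ x y, d x y = d y x)
  (htri : ∀ x y z, d x z ≤ d x y + d y z)
  (hzero : ∀ x y, d x y = 0 ↔ x = y)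
  (hbdd : ∀ x y, d x y ≤ 1)

include hsymm htri hzero in
lemma d_nonneg : ∀ x y, 0 ≤ d x y := by
  intro x y
  have h0 : d x x = 0 := (hzero x x).mpr rfl
  have := htri x y x
  rw [h0, hsymm y x] at this
  linarith

include hsymm htri hzero hbdd in
lemma phi_mem_LSet (O : Set X) (x : X) : phi d O x ∈ LSet d := by
  have hnn := d_nonneg hsymm htri hzero
  unfold phi
  by_cases hS : {g : G | g • x ∈ O}.Nonempty
  · simp only [if_pos hS]
    have hbdd_below : ∀ h : G, BddBelow ((fun g => d h g) '' {g : G | g • x ∈ O}) :=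
      fun h => ⟨0, fun r ⟨g, _, hg⟩ => hg ▸ hnn h g⟩
    have hne : ∀ h : G, ((fun g => d h g) '' {g : G | g • x ∈ O}).Nonempty :=
      fun h => hS.image _
    constructor
    · intro h
      obtain ⟨g, hg⟩ := hS
      constructor
      · exact le_csInf (hne h) fun r ⟨g', _, hg'⟩ => hg' ▸ hnn h g'
      · exact le_trans (csInf_le (hbdd_below h) ⟨g, hg, rfl⟩) (hbdd h g)
    · intro y₁ y₂
      rw [abs_sub_le_iff]
      constructor
      · beta_reduce
        rw [sub_le_comm]
        refine le_csInf (hne y₂) fun r ⟨g, hg, hgr⟩ => ?_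
        subst hgr
        rw [sub_le_iff_le_add']
        calc sInf _ ≤ d y₁ g := csInf_le (hbdd_below y₁) ⟨g, hg, rfl⟩
        _ ≤ d y₁ y₂ + d y₂ g := htri _ _ _
      · beta_reduce
        rw [sub_le_comm]
        refine le_csInf (hne y₁) fun r ⟨g, hg, hgr⟩ => ?_
        subst hgr
        rw [sub_le_iff_le_add']
        calc sInf _ ≤ d y₂ g := csInf_le (hbdd_below y₂) ⟨g, hg, rfl⟩
        _ ≤ d y₂ y₁ + d y₁ g := htri _ _ _
        _ = d y₁ y₂ + d y₁ g := by rw [hsymm y₂ y₁]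

  · simp only [if_neg hS]
    exact ⟨fun y => by norm_num, fun y₁ y₂ => by simpa using hnn y₁ y₂⟩

lemma phi_equivariant (hinv : ∀ g h₁ h₂ : G, d (h₁ * g) (h₂ * g) = d h₁ h₂)
    (O : Set X) (g : G) (x : X) (h : G) :
    phi d O (g • x) h = phi d O x (h * g) := by
  have hset : {g' : G | g' • (g • x) ∈ O} = {g' : G | (g' * g) • x ∈ O} := by
    ext g'; simp [smul_smul]
  have himg : (fun g' => d h g') '' {g' : G | (g' * g) • x ∈ O}
      = (fun k => d (h * g) k) '' {k : G | k • x ∈ O} := by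
    ext r
    constructor
    · rintro ⟨g', hg', rfl⟩
      exact ⟨g' * g, hg', hinv g h g'⟩
    · rintro ⟨k, hk, rfl⟩
      refine ⟨k * g⁻¹, by simpa using hk, ?_⟩
      have := hinv g h (k * g⁻¹)
      simpa using this.symm
  have hne : {g' : G | g' • (g • x) ∈ O}.Nonempty ↔ {k : G | k • x ∈ O}.Nonempty := by
    rw [hset]
    constructor
    · rintro ⟨g', hg'⟩; exact ⟨g' * g, hg'⟩
    · rintro ⟨k, hk⟩; exact ⟨k * g⁻¹, by simpa using hk⟩
  unfold phi
  by_cases hS : {k : G | k • x ∈ O}.Nonempty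
  · rw [if_pos (hne.mpr hS), if_pos hS, hset, himg]
  · rw [if_neg (fun hh => hS (hne.mp hh)), if_neg hS]

end PhiAux

section TopAux

set_option linter.unusedSectionVars false

variable {G : Type*} [Group G] [TopologicalSpace G] {d : G → G → ℝ}
  (hsymm : ∀ x y, d x y = d y x)
  (htri : ∀ x y z, d x z ≤ d x y + d y z)
  (hzero : ∀ x y, d x y = 0 ↔ x = y)
  (hcompat : ∀ s : Set G, IsOpen s ↔ ∀ x ∈ s, ∃ ε > 0, {y | d x y < ε} ⊆ s)

include htri hcompat in
lemma isOpen_ball (g : G) (ε : ℝ) : IsOpen {y | d g y < ε} := by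
  rw [hcompat]
  intro x hx
  refine ⟨ε - d g x, by simpa using hx, fun y hy => ?_⟩
  simp only [Set.mem_setOf_eq] at hy ⊢
  have := htri g x y
  linarith

include hsymm htri hzero hcompat in
lemma tendsto_d_self (h : G) :
    Filter.Tendsto (fun y => d y h) (𝓝 h) (𝓝 0) := by
  have hnn : ∀ x y, 0 ≤ d x y := by
    intro x y
    have h0 : d x x = 0 := (hzero x x).mpr rfl
    have := htri x y x
    rw [h0, hsymm y x] at this; linarith
  rw [Metric.tendsto_nhds]
  intro ε hε
  have hball : {y | d h y < ε} ∈ 𝓝 h := by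
    refine (isOpen_ball htri hcompat h ε).mem_nhds ?_
    simp [Set.mem_setOf_eq, (hzero h h).mpr rfl, hε]
  filter_upwards [hball] with y hy
  rw [Real.dist_eq, sub_zero, abs_of_nonneg (hnn y h)]
  rwa [hsymm y h]

include hsymm htri hzero hcompat in
lemma dense_seq_d [PolishSpace G] :
    ∃ D : ℕ → G, ∀ (g : G) (ε : ℝ), 0 < ε → ∃ n, d g (D n) < ε := by
  obtain ⟨D, hD⟩ := TopologicalSpace.exists_dense_seq G
  refine ⟨D, fun g ε hε => ?_⟩
  have hball : IsOpen {y | d g y < ε} := isOpen_ball htri hcompat g ε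
  have hne : {y | d g y < ε}.Nonempty := ⟨g, by simp [(hzero g g).mpr rfl, hε]⟩
  obtain ⟨n, hn⟩ := hD.exists_mem_open hball hne
  exact ⟨n, hn⟩

end TopAux

section USCAux

set_option linter.unusedSectionVars false

variable {G X : Type*} [Group G] [TopologicalSpace G] [TopologicalSpace X] [MulAction G X]
  [ContinuousSMul G X] {d : G → G → ℝ}
  (hnn : ∀ x y, 0 ≤ d x y)
  (hbdd : ∀ x y, d x y ≤ 1)

include hnn hbdd in
lemma isOpen_phi_lt {O : Set X} (hO : IsOpen O) (h : G) (b : ℝ) :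
    IsOpen {x | phi d O x h < b} := by
  rw [isOpen_iff_mem_nhds]
  intro x hx
  simp only [Set.mem_setOf_eq] at hx
  by_cases hS : {g : G | g • x ∈ O}.Nonempty
  · rw [phi, if_pos hS] at hx
    obtain ⟨r, ⟨g, hg, rfl⟩, hr⟩ := exists_lt_of_csInf_lt (hS.image _) hx
    have hU : IsOpen ((fun x' : X => g • x') ⁻¹' O) := hO.preimage (continuous_const_smul g)
    refine Filter.mem_of_superset (hU.mem_nhds hg) fun x' hx' => ?_
    have hS' : {g' : G | g' • x' ∈ O}.Nonempty := ⟨g, hx'⟩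
    show phi d O x' h < b
    rw [phi, if_pos hS']
    have hbb : BddBelow ((fun g => d h g) '' {g' : G | g' • x' ∈ O}) :=
      ⟨0, fun r ⟨g', _, hg'⟩ => hg' ▸ hnn h g'⟩
    calc sInf ((fun g => d h g) '' {g' : G | g' • x' ∈ O}) ≤ d h g :=
      csInf_le hbb ⟨g, hx', rfl⟩
    _ < b := hr
  · rw [phi, if_neg hS] at hx
    refine Filter.mem_of_superset Filter.univ_mem fun x' _ => ?_
    show phi d O x' h < b
    rw [phi]
    split_ifs with hS'
    · obtain ⟨g, hg⟩ := hS'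
      have hbb : BddBelow ((fun g => d h g) '' {g' : G | g' • x' ∈ O}) :=
        ⟨0, fun r ⟨g', _, hg'⟩ => hg' ▸ hnn h g'⟩
      calc sInf ((fun g => d h g) '' {g' : G | g' • x' ∈ O}) ≤ d h g :=
        csInf_le hbb ⟨g, hg, rfl⟩
      _ ≤ 1 := hbdd h g
      _ < b := hx
    · exact hx

include hnn hbdd in
lemma isFSigma_phi_mem_Ioo [PolishSpace X] {O : Set X} (hO : IsOpen O) (h : G) (a b : ℝ) :
    IsFSigma {x : X | phi d O x h ∈ Set.Ioo a b} := by
  have : {x : X | phi d O x h ∈ Set.Ioo a b}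
      = (⋃ n : ℕ, {x : X | phi d O x h < a + 1/(n+1)}ᶜ) ∩ {x : X | phi d O x h < b} := by
    ext x
    simp only [Set.mem_setOf_eq, Set.mem_Ioo, Set.mem_inter_iff, Set.mem_iUnion,
      Set.mem_compl_iff, not_lt]
    constructor
    · rintro ⟨h1, h2⟩
      obtain ⟨n, hn⟩ := exists_nat_one_div_lt (sub_pos.mpr h1)
      exact ⟨⟨n, by linarith⟩, h2⟩
    · rintro ⟨⟨n, hn⟩, h2⟩
      have : (0:ℝ) < 1/(n+1) := by positivity
      exact ⟨by linarith, h2⟩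
  rw [this]
  refine IsFSigma.inter ?_ ((isOpen_phi_lt hnn hbdd hO h b).isFSigma)
  exact isFSigma_iUnion_closed fun n =>
    (isOpen_phi_lt hnn hbdd hO h (a + 1/(n+1))).isClosed_compl

end USCAux

section LSetTopAux

set_option linter.unusedSectionVars false

variable {G : Type*} [Group G] [TopologicalSpace G] {d : G → G → ℝ}

lemma isClosed_LSet : IsClosed (LSet d) := by
  have h1 : IsClosed {f : G → ℝ | ∀ y, f y ∈ Set.Icc (0:ℝ) 1} := by
    rw [Set.setOf_forall]
    exact isClosed_iInter fun y => IsClosed.preimage (continuous_apply y) isClosed_Icc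
  have h2 : IsClosed {f : G → ℝ | ∀ y₁ y₂, |f y₁ - f y₂| ≤ d y₁ y₂} := by
    rw [Set.setOf_forall]
    refine isClosed_iInter fun y₁ => ?_
    rw [Set.setOf_forall]
    refine isClosed_iInter fun y₂ => ?_
    exact isClosed_le (((continuous_apply y₁).sub (continuous_apply y₂)).abs) continuous_const
  exact h1.inter h2

lemma isCompact_LSet : IsCompact (LSet d) := by
  refine IsCompact.of_isClosed_subset
    (isCompact_univ_pi fun _ : G => isCompact_Icc (a := (0:ℝ)) (b := 1)) isClosed_LSet ?_
  intro f hf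
  exact fun y _ => hf.1 y

instance LSet.compactSpace : CompactSpace (↥(LSet d)) :=
  isCompact_iff_compactSpace.mp isCompact_LSet

lemma polish_LSet [PolishSpace G]
    (hsymm : ∀ x y, d x y = d y x)
    (htri : ∀ x y z, d x z ≤ d x y + d y z)
    (hzero : ∀ x y, d x y = 0 ↔ x = y)
    (D : ℕ → G) (hD : ∀ (g : G) (ε : ℝ), 0 < ε → ∃ n, d g (D n) < ε) :
    PolishSpace (↥(LSet d)) := by
  have hnn : ∀ x y, 0 ≤ d x y := by
    intro x y
    have h0 : d x x = 0 := (hzero x x).mpr rfl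
    have := htri x y x
    rw [h0, hsymm y x] at this; linarith
  set E : ↥(LSet d) → (ℕ → ℝ) := fun f n => (f : G → ℝ) (D n) with hE
  have hcont : Continuous E :=
    continuous_pi fun n => (continuous_apply (D n)).comp continuous_subtype_val
  have hinj : Function.Injective E := by
    intro f f' hff
    ext g
    by_contra hne
    have habs : (0:ℝ) < |(f : G → ℝ) g - (f' : G → ℝ) g| := by
      rwa [abs_pos, sub_ne_zero]
    obtain ⟨n, hn⟩ := hD g (|(f : G → ℝ) g - (f' : G → ℝ) g| / 2) (by linarith)
    have h1 : |(f : G → ℝ) g - (f : G → ℝ) (D n)| ≤ d g (D n) := f.2.2 g (D n)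
    have h2 : |(f' : G → ℝ) g - (f' : G → ℝ) (D n)| ≤ d g (D n) := f'.2.2 g (D n)
    have heq : (f : G → ℝ) (D n) = (f' : G → ℝ) (D n) := congrFun hff n
    have : |(f : G → ℝ) g - (f' : G → ℝ) g| ≤
        |(f : G → ℝ) g - (f : G → ℝ) (D n)| + |(f' : G → ℝ) g - (f' : G → ℝ) (D n)| := by
      rw [heq] at h1 ⊢
      calc |(f : G → ℝ) g - (f' : G → ℝ) g|
          = |((f : G → ℝ) g - (f' : G → ℝ) (D n)) + ((f' : G → ℝ) (D n) - (f' : G → ℝ) g)| := by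
            rw [show (f : G → ℝ) g - (f' : G → ℝ) g
              = ((f : G → ℝ) g - (f' : G → ℝ) (D n)) + ((f' : G → ℝ) (D n) - (f' : G → ℝ) g)
              by ring]
        _ ≤ |(f : G → ℝ) g - (f' : G → ℝ) (D n)| + |(f' : G → ℝ) (D n) - (f' : G → ℝ) g| :=
            abs_add_le _ _
        _ = |(f : G → ℝ) g - (f' : G → ℝ) (D n)| + |(f' : G → ℝ) g - (f' : G → ℝ) (D n)| := by
            rw [abs_sub_comm ((f' : G → ℝ) (D n)) ((f' : G → ℝ) g)]
    linarith
  exact (hcont.isClosedEmbedding hinj).polishSpace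

end LSetTopAux

section ActionAux

set_option linter.unusedSectionVars false

variable {G : Type*} [Group G] [TopologicalSpace G] [IsTopologicalGroup G] {d : G → G → ℝ}

lemma continuous_eval_action
    (hsymm : ∀ x y, d x y = d y x)
    (htri : ∀ x y z, d x z ≤ d x y + d y z)
    (hzero : ∀ x y, d x y = 0 ↔ x = y)
    (hinv : ∀ g h₁ h₂ : G, d (h₁ * g) (h₂ * g) = d h₁ h₂)
    (tendsto_d : ∀ h : G, Filter.Tendsto (fun y => d y h) (𝓝 h) (𝓝 0))
    (i : ℕ) (h : G) :
    Continuous fun p : G × (ℕ → ↥(LSet d)) => (p.2 i : G → ℝ) (h * p.1) := by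
  rw [continuous_iff_continuousAt]
  rintro ⟨g₀, f₀⟩
  rw [ContinuousAt, tendsto_iff_dist_tendsto_zero]
  set c : ℝ := (f₀ i : G → ℝ) (h * g₀) with hc
  have hA : Filter.Tendsto (fun p : G × (ℕ → ↥(LSet d)) => dist ((p.2 i : G → ℝ) (h * g₀)) c)
      (𝓝 (g₀, f₀)) (𝓝 0) := by
    have hcont : Continuous fun p : G × (ℕ → ↥(LSet d)) => (p.2 i : G → ℝ) (h * g₀) :=
      (continuous_apply (h * g₀)).comp
        (continuous_subtype_val.comp ((continuous_apply i).comp continuous_snd))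
    have := hcont.tendsto (g₀, f₀)
    rwa [tendsto_iff_dist_tendsto_zero] at this
  have hB : Filter.Tendsto (fun p : G × (ℕ → ↥(LSet d)) => d (h * p.1 * g₀⁻¹) h)
      (𝓝 (g₀, f₀)) (𝓝 0) := by
    have hcont : Continuous fun p : G × (ℕ → ↥(LSet d)) => h * p.1 * g₀⁻¹ :=
      (continuous_const.mul continuous_fst).mul continuous_const
    have hval : Filter.Tendsto (fun p : G × (ℕ → ↥(LSet d)) => h * p.1 * g₀⁻¹)
        (𝓝 (g₀, f₀)) (𝓝 h) := by
      have := hcont.tendsto (g₀, f₀)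
      simpa using this
    exact (tendsto_d h).comp hval
  refine squeeze_zero (fun p => dist_nonneg) (fun p => ?_)
    (by simpa using hB.add hA)
  calc dist ((p.2 i : G → ℝ) (h * p.1)) c
      ≤ dist ((p.2 i : G → ℝ) (h * p.1)) ((p.2 i : G → ℝ) (h * g₀))
        + dist ((p.2 i : G → ℝ) (h * g₀)) c := dist_triangle _ _ _
    _ ≤ d (h * p.1 * g₀⁻¹) h + dist ((p.2 i : G → ℝ) (h * g₀)) c := by
        gcongr ?_ + _
        rw [Real.dist_eq]
        have hlip := (p.2 i).2.2 (h * p.1) (h * g₀)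
        have heq : d (h * p.1) (h * g₀) = d (h * p.1 * g₀⁻¹) h := by
          conv_lhs => rw [show h * p.1 = h * p.1 * g₀⁻¹ * g₀ by group]
          exact hinv g₀ (h * p.1 * g₀⁻¹) h
        rw [heq] at hlip
        exact hlip

end ActionAux

/-- Let `G` be a Polish group with right-invariant compatible metric `d`
bounded by `1`, `(X, τ)` a Polish `G`-space, and `(𝓞 i)_{i ∈ ℕ}` a countable basis for
`τ`. Then `ρ : X → 𝓛(G, d)^ℕ`, `ρ x = (φ^{𝓞 i}_x)_{i ∈ ℕ}`, is an injective `G`-mapping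
into the compact Polish `G`-space `𝓛(G, d)^ℕ` (with the product topology and the
coordinatewise action `(g · f) i h = f i (h * g)`) such that the preimage under `ρ` of
every open set is Fσ in `(X, τ)`; i.e. `ρ` is a Baire class 1 `G`-embedding of `X` into a
compact Polish `G`-space. -/
theorem rho_baire_class_one_G_embedding {G X : Type*} [Group G] [TopologicalSpace G]
    [IsTopologicalGroup G] [PolishSpace G]
    [TopologicalSpace X] [PolishSpace X] [MulAction G X] [ContinuousSMul G X]
    (d : G → G → ℝ)
    (hsymm : ∀ x y, d x y = d y x)
    (htri : ∀ x y z, d x z ≤ d x y + d y z)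
    (hzero : ∀ x y, d x y = 0 ↔ x = y)
    (hcompat : ∀ s : Set G, IsOpen s ↔ ∀ x ∈ s, ∃ ε > 0, {y | d x y < ε} ⊆ s)
    (hinv : ∀ g h₁ h₂ : G, d (h₁ * g) (h₂ * g) = d h₁ h₂)
    (hbdd : ∀ x y, d x y ≤ 1)
    (O : ℕ → Set X) (hObasis : TopologicalSpace.IsTopologicalBasis (Set.range O)) :
    -- ρ takes values in 𝓛(G,d)^ℕ
    (∀ (x : X) (i : ℕ), phi d (O i) x ∈ LSet d) ∧
    -- ρ is injective
    Function.Injective (fun (x : X) => fun (i : ℕ) => phi d (O i) x) ∧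
    -- ρ is a G-mapping for the coordinatewise action (g · f) i h = f i (h * g)
    (∀ (g : G) (x : X) (i : ℕ) (h : G), phi d (O i) (g • x) h = phi d (O i) x (h * g)) ∧
    -- ρ is Baire class 1: preimages of open sets are Fσ
    (∀ W : Set (ℕ → G → ℝ), IsOpen W →
      IsFSigma {x : X | (fun i => phi d (O i) x) ∈ W}) ∧
    -- the coordinatewise action makes 𝓛(G,d)^ℕ a compact Polish G-space
    (∃ a : G → (ℕ → ↥(LSet d)) → (ℕ → ↥(LSet d)),
      (∀ (g : G) (f : ℕ → ↥(LSet d)) (i : ℕ) (h : G),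
        (a g f i : G → ℝ) h = (f i : G → ℝ) (h * g)) ∧
      (∀ f, a 1 f = f) ∧
      (∀ g₁ g₂ f, a (g₁ * g₂) f = a g₁ (a g₂ f)) ∧
      Continuous (fun p : G × (ℕ → ↥(LSet d)) => a p.1 p.2) ∧
      CompactSpace (ℕ → ↥(LSet d)) ∧ PolishSpace (ℕ → ↥(LSet d))) := by
  have hnn := d_nonneg hsymm htri hzero
  have part1 : ∀ (x : X) (i : ℕ), phi d (O i) x ∈ LSet d :=
    fun x i => phi_mem_LSet hsymm htri hzero hbdd (O i) x
  obtain ⟨D, hD⟩ := dense_seq_d hsymm htri hzero hcompat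
  -- injectivity
  have part2 : Function.Injective (fun (x : X) => fun (i : ℕ) => phi d (O i) x) := by
    intro x y hxy
    by_contra hne
    obtain ⟨U, V, hU, hV, hxU, hyV, hUV⟩ := t2_separation hne
    obtain ⟨v, ⟨i, rfl⟩, hxv, hvU⟩ := hObasis.exists_subset_of_mem_open hxU hU
    have hSx : {g : G | g • x ∈ O i}.Nonempty := ⟨1, by simpa using hxv⟩
    have hbbx : BddBelow ((fun g => d 1 g) '' {g : G | g • x ∈ O i}) :=
      ⟨0, fun r ⟨g', _, hg'⟩ => hg' ▸ hnn 1 g'⟩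
    have hx0 : phi d (O i) x 1 = 0 := by
      rw [phi, if_pos hSx]
      refine le_antisymm ?_ (le_csInf (hSx.image _) fun r ⟨g', _, hg'⟩ => hg' ▸ hnn 1 g')
      have : d 1 1 = 0 := (hzero 1 1).mpr rfl
      calc sInf ((fun g => d 1 g) '' {g : G | g • x ∈ O i}) ≤ d 1 1 :=
        csInf_le hbbx ⟨1, by simpa using hxv, rfl⟩
      _ = 0 := this
    have hy0 : phi d (O i) y 1 = 0 := by
      have := congrFun (congrFun hxy i) 1
      simp only at this
      rw [← this]
      exact hx0
    have hyc : y ∈ closure (O i) := by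
      rw [mem_closure_iff]
      intro V' hV' hyV'
      have hT : IsOpen {g : G | g • y ∈ V'} :=
        hV'.preimage (continuous_id.smul continuous_const)
      have h1T : (1:G) ∈ {g : G | g • y ∈ V'} := by simpa using hyV'
      obtain ⟨ε, hε, hball⟩ := (hcompat _).mp hT 1 h1T
      have hSy : {g : G | g • y ∈ O i}.Nonempty := by
        by_contra hSy
        rw [phi, if_neg hSy] at hy0
        exact one_ne_zero hy0
      rw [phi, if_pos hSy] at hy0
      have hlt : sInf ((fun g => d 1 g) '' {g : G | g • y ∈ O i}) < ε := by
        rw [hy0]; exact hε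
      obtain ⟨r, ⟨g, hg, rfl⟩, hr⟩ := exists_lt_of_csInf_lt (hSy.image _) hlt
      exact ⟨g • y, hball hr, hg⟩
    have hVc : closure U ⊆ Vᶜ :=
      closure_minimal (hUV.subset_compl_right) hV.isClosed_compl
    exact hVc (closure_mono hvU hyc) hyV
  have part3 : ∀ (g : G) (x : X) (i : ℕ) (h : G),
      phi d (O i) (g • x) h = phi d (O i) x (h * g) :=
    fun g x i h => phi_equivariant hinv (O i) g x h
  -- Baire class 1
  have part4 : ∀ W : Set (ℕ → G → ℝ), IsOpen W →
      IsFSigma {x : X | (fun i => phi d (O i) x) ∈ W} := by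
    intro W hW
    set L : Set (ℕ → G → ℝ) := {f | ∀ i, f i ∈ LSet d} with hLdef
    have hρL : ∀ x : X, (fun i => phi d (O i) x) ∈ L := fun x i => part1 x i
    set Good : Finset (ℕ × ℕ × ℚ × ℚ) → Prop := fun t =>
      ∀ f ∈ L, (∀ p ∈ t, f p.1 (D p.2.1) ∈ Set.Ioo (p.2.2.1 : ℝ) (p.2.2.2 : ℝ)) → f ∈ W
      with hGooddef
    have hkey : {x : X | (fun i => phi d (O i) x) ∈ W}
        = ⋃ t : {t : Finset (ℕ × ℕ × ℚ × ℚ) // Good t},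
            {x : X | ∀ p ∈ t.1,
              phi d (O p.1) x (D p.2.1) ∈ Set.Ioo (p.2.2.1 : ℝ) (p.2.2.2 : ℝ)} := by
      ext x
      simp only [Set.mem_setOf_eq, Set.mem_iUnion]
      constructor
      · intro hxW
        obtain ⟨I, u, hu, hIu⟩ := (isOpen_pi_iff.mp hW) _ hxW
        have hstep : ∀ i : ℕ, ∃ (J : Finset G) (v : G → Set ℝ),
            i ∈ I → ((∀ g ∈ J, IsOpen (v g) ∧ phi d (O i) x g ∈ v g)
              ∧ (J : Set G).pi v ⊆ u i) := by
          intro i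
          by_cases hi : i ∈ I
          · obtain ⟨J, v, h1, h2⟩ := (isOpen_pi_iff.mp (hu i hi).1) _ (hu i hi).2
            exact ⟨J, v, fun _ => ⟨h1, h2⟩⟩
          · exact ⟨∅, fun _ => ∅, fun h => absurd h hi⟩
        choose J v hJv using hstep
        have hstep2 : ∀ (i : ℕ) (g : G), ∃ (n : ℕ) (a b : ℚ),
            i ∈ I → g ∈ J i →
              (phi d (O i) x (D n) ∈ Set.Ioo (a:ℝ) (b:ℝ) ∧
               ∀ f ∈ L, f i (D n) ∈ Set.Ioo (a:ℝ) (b:ℝ) → f i g ∈ v i g) := by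
          intro i g
          by_cases hig : i ∈ I ∧ g ∈ J i
          · obtain ⟨hi, hg⟩ := hig
            obtain ⟨hvopen, hvmem⟩ := (hJv i hi).1 g hg
            obtain ⟨ε, hε, hball⟩ := Metric.isOpen_iff.mp hvopen _ hvmem
            obtain ⟨n, hn⟩ := hD g (ε/4) (by linarith)
            have hlip : |phi d (O i) x (D n) - phi d (O i) x g| ≤ d g (D n) := by
              have h' := (part1 x i).2 (D n) g
              rwa [hsymm (D n) g] at h'
            obtain ⟨a, ha1, ha2⟩ := exists_rat_btwn
              (show phi d (O i) x (D n) - ε/4 < phi d (O i) x (D n) by linarith)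
            obtain ⟨b, hb1, hb2⟩ := exists_rat_btwn
              (show phi d (O i) x (D n) < phi d (O i) x (D n) + ε/4 by linarith)
            refine ⟨n, a, b, fun _ _ => ⟨⟨ha2, hb1⟩, ?_⟩⟩
            intro f hf hfmem
            apply hball
            rw [Metric.mem_ball, Real.dist_eq]
            have hf1 : |f i g - f i (D n)| ≤ d g (D n) := (hf i).2 g (D n)
            have habs : |phi d (O i) x (D n) - phi d (O i) x g| < ε/4 :=
              lt_of_le_of_lt hlip hn
            have h2' : |f i (D n) - phi d (O i) x (D n)| < ε/4 := by
              obtain ⟨hm1, hm2⟩ := hfmem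
              rw [abs_lt]
              constructor <;> nlinarith [ha1, ha2, hb1, hb2, hm1, hm2]
            have habs' := abs_lt.mp habs
            have hf1' := abs_le.mp hf1
            have h2'' := abs_lt.mp h2'
            rw [abs_lt]
            constructor <;> nlinarith
          · exact ⟨0, 0, 0, fun hi hg => (hig ⟨hi, hg⟩).elim⟩
        choose nn aa bb hnab using hstep2
        refine ⟨⟨(I.sigma (fun i => J i)).image
          (fun p => (p.1, nn p.1 p.2, aa p.1 p.2, bb p.1 p.2)), ?_⟩, ?_⟩
        · intro f hfL hfbox
          apply hIu
          rw [Set.mem_pi]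
          intro i hi
          apply (hJv i hi).2
          rw [Set.mem_pi]
          intro g hg
          have hp : (i, nn i g, aa i g, bb i g) ∈ (I.sigma (fun i => J i)).image
              (fun p => (p.1, nn p.1 p.2, aa p.1 p.2, bb p.1 p.2)) :=
            Finset.mem_image.mpr ⟨⟨i, g⟩, Finset.mem_sigma.mpr ⟨hi, hg⟩, rfl⟩
          exact ((hnab i g) hi hg).2 f hfL (hfbox _ hp)
        · intro p hp
          obtain ⟨⟨i, g⟩, hmem, rfl⟩ := Finset.mem_image.mp hp
          obtain ⟨hi, hg⟩ := Finset.mem_sigma.mp hmem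
          exact ((hnab i g) hi hg).1
      · rintro ⟨⟨t, ht⟩, hxt⟩
        exact ht _ (hρL x) hxt
    rw [hkey]
    refine IsFSigma.iUnion fun t => ?_
    have heq : {x : X | ∀ p ∈ t.1,
          phi d (O p.1) x (D p.2.1) ∈ Set.Ioo (p.2.2.1 : ℝ) (p.2.2.2 : ℝ)}
        = ⋂ p ∈ t.1, {x : X |
            phi d (O p.1) x (D p.2.1) ∈ Set.Ioo (p.2.2.1 : ℝ) (p.2.2.2 : ℝ)} := by
      ext x; simp
    rw [heq]
    exact isFSigma_biInter_finset _ fun p _ =>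
      isFSigma_phi_mem_Ioo hnn hbdd (hObasis.isOpen ⟨p.1, rfl⟩) _ _ _
  refine ⟨part1, part2, part3, part4, ?_⟩
  -- the compact Polish G-space structure
  have hmem : ∀ (g : G) (f : ℕ → ↥(LSet d)) (i : ℕ),
      (fun h => (f i : G → ℝ) (h * g)) ∈ LSet d := by
    intro g f i
    refine ⟨fun y => (f i).2.1 (y * g), fun y₁ y₂ => ?_⟩
    have := (f i).2.2 (y₁ * g) (y₂ * g)
    rwa [hinv] at this
  refine ⟨fun g f i => ⟨fun h => (f i : G → ℝ) (h * g), hmem g f i⟩,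
    fun g f i h => rfl, ?_, ?_, ?_, inferInstance, ?_⟩
  · intro f
    funext i
    apply Subtype.ext
    funext h
    show (f i : G → ℝ) (h * 1) = (f i : G → ℝ) h
    rw [mul_one]
  · intro g₁ g₂ f
    funext i
    apply Subtype.ext
    funext h
    show (f i : G → ℝ) (h * (g₁ * g₂)) = (f i : G → ℝ) (h * g₁ * g₂)
    rw [mul_assoc]
  · apply continuous_pi
    intro i
    apply Continuous.subtype_mk
    apply continuous_pi
    intro h
    exact continuous_eval_action hsymm htri hzero hinv
      (fun h' => tendsto_d_self hsymm htri hzero hcompat h') i h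
  · haveI := polish_LSet hsymm htri hzero D hD
    infer_instance
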